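/- Let E be a pseudo effect algebra satisfying (RDP) and let m₁, …, mₙ ∈ J(E). Then for every x ∈ E: (⋁ᵢ₌₁ⁿ mᵢ)(x) = sup{m₁(x₁) + ⋯ + mₙ(xₙ) : x = x₁ + ⋯ + xₙ, x₁, …, xₙ ∈ E} and (⋀ᵢ₌₁ⁿ mᵢ)(x) = inf{m₁(x₁) + ⋯ + mₙ(xₙ) : x = x₁ + ⋯ + xₙ, x₁, …, xₙ ∈ E}, where ⋁ and ⋀ are the lattice operations of J(E) under ≤⁺. -/

import Mathlib

/-- A pseudo effect algebra: a partial algebra `(E; +, 0, 1)` where the partial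
addition is encoded as `padd : E → E → Option E` (`padd a b = some c` means
`a + b` is defined and equals `c`). -/
class PseudoEffectAlgebra (E : Type) where
  padd : E → E → Option E
  pzero : E
  pone : E
  /-- (i) `a+b` and `(a+b)+c` exist iff `b+c` and `a+(b+c)` exist ... -/
  assoc_defined : ∀ a b c : E,
    (∃ x, padd a b = some x ∧ (padd x c).isSome) ↔
      (∃ y, padd b c = some y ∧ (padd a y).isSome)
  /-- ... and in this case `(a+b)+c = a+(b+c)`. -/
  assoc_eq : ∀ a b c x y : E, padd a b = some x → padd b c = some y →
    padd x c = padd a y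
  /-- (ii) there is exactly one `d` with `a + d = 1`. -/
  exists_unique_right : ∀ a : E, ∃! d, padd a d = some pone
  /-- (ii) there is exactly one `e` with `e + a = 1`. -/
  exists_unique_left : ∀ a : E, ∃! e, padd e a = some pone
  /-- (iii) if `a+b` exists, there are `d, e` with `a+b = d+a = b+e`. -/
  shift : ∀ a b c : E, padd a b = some c →
    ∃ d e, padd d a = some c ∧ padd b e = some c
  /-- (iv) if `1+a` exists then `a = 0`. -/
  one_add : ∀ a : E, (padd pone a).isSome → a = pzero
  /-- (iv) if `a+1` exists then `a = 0`. -/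
  add_one : ∀ a : E, (padd a pone).isSome → a = pzero

namespace PseudoEffectAlgebra

variable {E : Type} [PseudoEffectAlgebra E]

/-- The induced partial order: `a ≤ b` iff `b = a + c` for some `c ∈ E`. -/
def pLe (a b : E) : Prop := ∃ c, padd a c = some b

/-- The Riesz Decomposition Property (RDP). -/
def RDP (E : Type) [PseudoEffectAlgebra E] : Prop :=
  ∀ a₁ a₂ b₁ b₂ c : E, padd a₁ a₂ = some c → padd b₁ b₂ = some c →
    ∃ d₁ d₂ d₃ d₄ : E, padd d₁ d₂ = some a₁ ∧ padd d₃ d₄ = some a₂ ∧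
      padd d₁ d₃ = some b₁ ∧ padd d₂ d₄ = some b₂

/-- A signed measure on `E`. -/
def IsSignedMeasure (m : E → ℝ) : Prop :=
  ∀ a b c : E, padd a b = some c → m c = m a + m b

/-- A (positive) measure on `E`. -/
def IsMeasure (m : E → ℝ) : Prop :=
  IsSignedMeasure m ∧ ∀ a : E, 0 ≤ m a

/-- A state on `E`. -/
def IsState (s : E → ℝ) : Prop := IsMeasure s ∧ s pone = 1

/-- A Jordan signed measure: a difference of two measures. -/
def IsJordan (m : E → ℝ) : Prop :=
  ∃ m₁ m₂ : E → ℝ, IsMeasure m₁ ∧ IsMeasure m₂ ∧ m = m₁ - m₂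

/-- `m ≤⁺ m'` iff `m' - m` is a (positive) measure. -/
def MLe (m m' : E → ℝ) : Prop := IsMeasure (m' - m)

/-- The (partial) sum `x₁ + ⋯ + xₙ` of a nonempty list of elements of `E`. -/
def lsum : List E → Option E
  | [] => some pzero
  | [a] => some a
  | a :: b :: l => (lsum (b :: l)).bind (fun s => padd a s)

/-- `m` is the supremum, in the po-group `J(E)` of Jordan signed measures ordered
by `≤⁺`, of the set `S`. -/
def IsSupIn (S : Set (E → ℝ)) (m : E → ℝ) : Prop :=
  IsJordan m ∧ (∀ t ∈ S, MLe t m) ∧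
    ∀ h : E → ℝ, IsJordan h → (∀ t ∈ S, MLe t h) → MLe m h

/-- `m` is the infimum, in the po-group `J(E)` of Jordan signed measures ordered
by `≤⁺`, of the set `S`. -/
def IsInfIn (S : Set (E → ℝ)) (m : E → ℝ) : Prop :=
  IsJordan m ∧ (∀ t ∈ S, MLe m t) ∧
    ∀ h : E → ℝ, IsJordan h → (∀ t ∈ S, MLe h t) → MLe h m

/-!
Write `S(x)` for the set of values `m₁(x₁) + ⋯ + mₙ(xₙ)` over all decompositions
`x = x₁ + ⋯ + xₙ`. Two decomposition arguments show `S(a + b) = S(a) + S(b)`: RDP refines a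
decomposition of `a + b` into ones of `a` and of `b`, and conversely decompositions of `a` and
of `b` can be interleaved into one of `a + b`, using axiom (iii) to move each piece of `b` past
the tail of the decomposition of `a` (this changes pieces, but not their values under any
signed measure). Hence `x ↦ sup S(x)` is additive; it lies above every `mᵢ` and below every
Jordan upper bound of the `mᵢ`, so it is their supremum in `J(E)`. The infimum is the negated
supremum of the `-mᵢ`.
-/

lemma exists_assoc_right {a b c x u : E} (hab : padd a b = some x) (hxc : padd x c = some u) :
    ∃ y, padd b c = some y ∧ padd a y = some u := by
  obtain ⟨y, hbc, -⟩ := (assoc_defined a b c).mp ⟨x, hab, by simp [hxc]⟩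
  exact ⟨y, hbc, (assoc_eq a b c x y hab hbc).symm.trans hxc⟩

lemma exists_assoc_left {a b c y u : E} (hbc : padd b c = some y) (hay : padd a y = some u) :
    ∃ x, padd a b = some x ∧ padd x c = some u := by
  obtain ⟨x, hab, -⟩ := (assoc_defined a b c).mpr ⟨y, hbc, by simp [hay]⟩
  exact ⟨x, hab, (assoc_eq a b c x y hab hbc).trans hay⟩

lemma padd_one_zero : padd (pone : E) pzero = some pone := by
  obtain ⟨d, hd, -⟩ := exists_unique_right (pone : E)
  obtain rfl : d = pzero := one_add d (by simp [hd])
  exact hd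

lemma padd_zero_one : padd (pzero : E) pone = some pone := by
  obtain ⟨e, he, -⟩ := exists_unique_left (pone : E)
  obtain rfl : e = pzero := add_one e (by simp [he])
  exact he

lemma padd_zero (a : E) : padd a pzero = some a := by
  obtain ⟨a', ha', -⟩ := exists_unique_left a
  obtain ⟨y, hy, ha'y⟩ := exists_assoc_right ha' padd_one_zero
  obtain ⟨_, -, huniq⟩ := exists_unique_right a'
  rwa [(huniq y ha'y).trans (huniq a ha').symm] at hy

lemma zero_padd (a : E) : padd pzero a = some a := by
  obtain ⟨a', ha', -⟩ := exists_unique_right a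
  obtain ⟨x, hx, hxa'⟩ := exists_assoc_left ha' padd_zero_one
  obtain ⟨_, -, huniq⟩ := exists_unique_left a'
  rwa [(huniq x hxa').trans (huniq a ha').symm] at hx

lemma eq_zero_of_padd_eq_zero {a b : E} (h : padd a b = some pzero) :
    a = pzero ∧ b = pzero := by
  obtain ⟨y, hb1, -⟩ := exists_assoc_right h padd_zero_one
  obtain rfl : b = pzero := add_one b (by simp [hb1])
  exact ⟨Option.some.inj ((padd_zero a).symm.trans h), rfl⟩

lemma IsSignedMeasure.map_zero {μ : E → ℝ} (hμ : IsSignedMeasure μ) : μ pzero = 0 := by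
  linarith [hμ pzero pzero pzero (padd_zero pzero)]

lemma IsMeasure.add {μ ν : E → ℝ} (hμ : IsMeasure μ) (hν : IsMeasure ν) :
    IsMeasure (μ + ν) := by
  refine ⟨fun a b c h => ?_, fun a => add_nonneg (hμ.2 a) (hν.2 a)⟩
  simp only [Pi.add_apply, hμ.1 a b c h, hν.1 a b c h]
  ring

lemma IsJordan.isSignedMeasure {μ : E → ℝ} (h : IsJordan μ) : IsSignedMeasure μ := by
  obtain ⟨p, q, hp, hq, rfl⟩ := h
  intro a b c habc
  simp only [Pi.sub_apply, hp.1 a b c habc, hq.1 a b c habc]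
  ring

lemma IsJordan.neg {μ : E → ℝ} (h : IsJordan μ) : IsJordan (-μ) := by
  obtain ⟨p, q, hp, hq, rfl⟩ := h
  exact ⟨q, p, hq, hp, neg_sub p q⟩

lemma IsJordan.of_mle {j μ : E → ℝ} (hj : IsJordan j) (h : MLe j μ) : IsJordan μ := by
  obtain ⟨p, q, hp, hq, rfl⟩ := hj
  exact ⟨μ - (p - q) + p, q, h.add hp, hq, by abel⟩

lemma neg_mle_comm {μ ν : E → ℝ} : MLe (-μ) ν ↔ MLe (-ν) μ := by
  rw [MLe, MLe, sub_neg_eq_add, sub_neg_eq_add, add_comm]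

lemma mle_neg_comm {μ ν : E → ℝ} : MLe μ (-ν) ↔ MLe ν (-μ) := by
  rw [MLe, MLe, sub_eq_add_neg, sub_eq_add_neg, add_comm]

lemma IsInfIn.neg {S : Set (E → ℝ)} {w : E → ℝ} (hw : IsInfIn S w) : IsSupIn (-S) (-w) := by
  obtain ⟨hwj, hlower, hgreatest⟩ := hw
  refine ⟨hwj.neg, fun t ht => mle_neg_comm.mpr (hlower (-t) ht), fun h hj hupper => ?_⟩
  refine neg_mle_comm.mpr (hgreatest (-h) hj.neg fun t ht => neg_mle_comm.mpr ?_)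
  exact hupper (-t) (by simpa using ht)

def vsum {k : ℕ} (xs : Fin k → E) : Option E := lsum (List.ofFn xs)

lemma vsum_cons_eq_some {k : ℕ} {a c : E} {xs : Fin k → E} :
    vsum (Fin.cons a xs) = some c ↔ ∃ t, vsum xs = some t ∧ padd a t = some c := by
  cases k with
  | zero => simp [vsum, lsum, padd_zero, Fin.cons, List.ofFn_zero]
  | succ k => simp [vsum, List.ofFn_succ, lsum, Option.bind_eq_some_iff]

lemma IsSignedMeasure.apply_eq_sum_of_vsum {μ : E → ℝ} (hμ : IsSignedMeasure μ) {k : ℕ}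
    {xs : Fin k → E} {c : E} (h : vsum xs = some c) : μ c = ∑ i, μ (xs i) := by
  induction xs using Fin.consInduction generalizing c with
  | elim0 => simp [← Option.some.inj h, hμ.map_zero]
  | cons a xs ih =>
    obtain ⟨t, ht, hat⟩ := vsum_cons_eq_some.mp h
    simp [Fin.sum_univ_succ, hμ a t c hat, ih ht]

lemma vsum_const_zero (k : ℕ) : vsum (fun _ : Fin k => (pzero : E)) = some pzero := by
  induction k with
  | zero => rfl
  | succ k ih =>
    rw [← Fin.cons_self_tail (fun _ => pzero), vsum_cons_eq_some]
    exact ⟨pzero, ih, padd_zero pzero⟩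

lemma vsum_ite_eq {k : ℕ} (i : Fin k) (x : E) :
    vsum (fun j => if j = i then x else pzero) = some x := by
  induction k with
  | zero => exact i.elim0
  | succ k ih =>
    rw [← Fin.cons_self_tail (fun j => if j = i then x else pzero), vsum_cons_eq_some]
    cases i using Fin.cases with
    | zero =>
      refine ⟨pzero, ?_, by simpa using padd_zero x⟩
      convert vsum_const_zero (E := E) k using 2
      simp [Fin.tail_def, Fin.succ_ne_zero]
    | succ i =>
      refine ⟨x, ?_, by simpa [(Fin.succ_ne_zero i).symm] using zero_padd x⟩
      convert ih i using 2
      simp [Fin.tail_def]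

lemma exists_vsum_padd_swap {k : ℕ} {as : Fin k → E} {a b u : E} (has : vsum as = some a)
    (hab : padd a b = some u) :
    ∃ as' : Fin k → E, ∃ a', vsum as' = some a' ∧ padd b a' = some u ∧
      ∀ i (μ : E → ℝ), IsSignedMeasure μ → μ (as' i) = μ (as i) := by
  induction as using Fin.consInduction generalizing a u with
  | elim0 =>
    obtain rfl : pzero = a := Option.some.inj has
    obtain rfl : b = u := Option.some.inj ((zero_padd b).symm.trans hab)
    exact ⟨Fin.elim0, pzero, rfl, padd_zero b, fun i => i.elim0⟩
  | cons a₀ as ih =>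
    obtain ⟨t, ht, ha₀t⟩ := vsum_cons_eq_some.mp has
    obtain ⟨y, hty, ha₀y⟩ := exists_assoc_right ha₀t hab
    obtain ⟨as', t', has', hbt', has'_eq⟩ := ih ht hty
    obtain ⟨v, ha₀b, hvt'⟩ := exists_assoc_left hbt' ha₀y
    -- axiom (iii): `a₀ + b = b + e`, so `e` has the values of `a₀`
    obtain ⟨-, e, -, hbe⟩ := shift a₀ b v ha₀b
    obtain ⟨a', het', hba'⟩ := exists_assoc_right hbe hvt'
    refine ⟨Fin.cons e as', a', vsum_cons_eq_some.mpr ⟨t', has', het'⟩, hba', ?_⟩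
    intro i μ hμ
    cases i using Fin.cases with
    | zero =>
      simp only [Fin.cons_zero]
      linarith [hμ a₀ b v ha₀b, hμ b e v hbe]
    | succ i => simpa using has'_eq i μ hμ

lemma exists_vsum_of_padd {k : ℕ} {as bs : Fin k → E} {a b c : E} (has : vsum as = some a)
    (hbs : vsum bs = some b) (hab : padd a b = some c) :
    ∃ cs : Fin k → E, vsum cs = some c ∧
      ∀ i (μ : E → ℝ), IsSignedMeasure μ → μ (cs i) = μ (as i) + μ (bs i) := by
  induction k generalizing a b c with
  | zero =>
    obtain rfl : pzero = a := Option.some.inj has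
    obtain rfl : pzero = b := Option.some.inj hbs
    obtain rfl : pzero = c := Option.some.inj ((padd_zero pzero).symm.trans hab)
    exact ⟨Fin.elim0, rfl, fun i => i.elim0⟩
  | succ k ih =>
    rw [← Fin.cons_self_tail as, vsum_cons_eq_some] at has
    rw [← Fin.cons_self_tail bs, vsum_cons_eq_some] at hbs
    obtain ⟨a', ha', ha₀a'⟩ := has
    obtain ⟨b', hb', hb₀b'⟩ := hbs
    -- regroup `c = (a₀ + a') + (b₀ + b')` as `(a₀ + b₀) + (a'' + b')`, moving `b₀` past `a'`
    obtain ⟨t, ha'b, ha₀t⟩ := exists_assoc_right ha₀a' hab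
    obtain ⟨u, ha'b₀, hub'⟩ := exists_assoc_left hb₀b' ha'b
    obtain ⟨as', a'', has', hb₀a'', has'_eq⟩ := exists_vsum_padd_swap ha' ha'b₀
    obtain ⟨w, ha''b', hb₀w⟩ := exists_assoc_right hb₀a'' hub'
    obtain ⟨c₀, ha₀b₀, hc₀w⟩ := exists_assoc_left hb₀w ha₀t
    obtain ⟨cs, hcs, hcs_eq⟩ := ih has' hb' ha''b'
    refine ⟨Fin.cons c₀ cs, vsum_cons_eq_some.mpr ⟨w, hcs, hc₀w⟩, ?_⟩
    intro i μ hμ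
    cases i using Fin.cases with
    | zero => simpa using hμ _ _ _ ha₀b₀
    | succ i => simp [hcs_eq i μ hμ, has'_eq i μ hμ, Fin.tail]

lemma RDP.exists_vsum_split (hRDP : RDP E) {k : ℕ} {xs : Fin k → E} {a b c : E}
    (hxs : vsum xs = some c) (hab : padd a b = some c) :
    ∃ as bs : Fin k → E, vsum as = some a ∧ vsum bs = some b ∧
      ∀ i, padd (as i) (bs i) = some (xs i) := by
  induction xs using Fin.consInduction generalizing a b c with
  | elim0 =>
    obtain rfl : pzero = c := Option.some.inj hxs
    obtain ⟨rfl, rfl⟩ := eq_zero_of_padd_eq_zero hab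
    exact ⟨Fin.elim0, Fin.elim0, rfl, rfl, fun i => i.elim0⟩
  | cons x xs ih =>
    obtain ⟨t, ht, hxt⟩ := vsum_cons_eq_some.mp hxs
    obtain ⟨d₁, d₂, d₃, d₄, h₁₂, h₃₄, h₁₃, h₂₄⟩ := hRDP x t a b c hxt hab
    obtain ⟨as, bs, has, hbs, hasbs⟩ := ih ht h₃₄
    refine ⟨Fin.cons d₁ as, Fin.cons d₂ bs, vsum_cons_eq_some.mpr ⟨d₃, has, h₁₃⟩,
      vsum_cons_eq_some.mpr ⟨d₄, hbs, h₂₄⟩, fun i => ?_⟩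
    cases i using Fin.cases with
    | zero => simpa using h₁₂
    | succ i => simpa using hasbs i

lemma MLe.le {μ ν : E → ℝ} (h : MLe μ ν) (x : E) : μ x ≤ ν x :=
  sub_nonneg.mp (h.2 x)

lemma mle_of_le {μ ν : E → ℝ} (hμ : IsSignedMeasure μ) (hν : IsSignedMeasure ν)
    (h : ∀ x, μ x ≤ ν x) : MLe μ ν := by
  refine ⟨fun a b c hab => ?_, fun x => sub_nonneg.mpr (h x)⟩
  simp only [Pi.sub_apply, hμ a b c hab, hν a b c hab]
  ring

section Decomposition

open scoped Pointwise

variable {n : ℕ}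

def decompSums (m : Fin n → E → ℝ) (x : E) : Set ℝ :=
  {r | ∃ xs : Fin n → E, vsum xs = some x ∧ r = ∑ i, m i (xs i)}

variable {m : Fin n → E → ℝ}

lemma mem_decompSums (hm : ∀ i, IsSignedMeasure (m i)) (i : Fin n) (x : E) :
    m i x ∈ decompSums m x := by
  refine ⟨fun j => if j = i then x else pzero, vsum_ite_eq i x, ?_⟩
  simp [apply_ite, (hm _).map_zero]

lemma decompSums_nonempty (hn : 1 ≤ n) (hm : ∀ i, IsSignedMeasure (m i)) (x : E) :
    (decompSums m x).Nonempty :=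
  ⟨_, mem_decompSums hm ⟨0, hn⟩ x⟩

lemma bddAbove_decompSums (hm : ∀ i, IsJordan (m i)) (x : E) : BddAbove (decompSums m x) := by
  choose p q hp hq hpq using hm
  refine ⟨∑ i, p i x, ?_⟩
  rintro _ ⟨xs, hxs, rfl⟩
  refine Finset.sum_le_sum fun i _ => ?_
  calc m i (xs i) ≤ p i (xs i) := by simpa [hpq i] using (hq i).2 (xs i)
    _ ≤ ∑ j, p i (xs j) := Finset.single_le_sum (fun j _ => (hp i).2 (xs j)) (Finset.mem_univ i)
    _ = p i x := ((hp i).1.apply_eq_sum_of_vsum hxs).symm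

lemma mem_upperBounds_decompSums {v : E → ℝ} (hv : IsSignedMeasure v) (hmv : ∀ i, MLe (m i) v)
    (x : E) : v x ∈ upperBounds (decompSums m x) := by
  rintro _ ⟨xs, hxs, rfl⟩
  rw [hv.apply_eq_sum_of_vsum hxs]
  exact Finset.sum_le_sum fun i _ => (hmv i).le (xs i)

lemma decompSums_eq_add (hRDP : RDP E) (hm : ∀ i, IsSignedMeasure (m i)) {a b c : E}
    (hab : padd a b = some c) : decompSums m c = decompSums m a + decompSums m b := by
  ext r
  rw [Set.mem_add]
  constructor
  · rintro ⟨xs, hxs, rfl⟩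
    obtain ⟨as, bs, has, hbs, hasbs⟩ := hRDP.exists_vsum_split hxs hab
    refine ⟨_, ⟨as, has, rfl⟩, _, ⟨bs, hbs, rfl⟩, ?_⟩
    rw [← Finset.sum_add_distrib]
    exact Finset.sum_congr rfl fun i _ => (hm i _ _ _ (hasbs i)).symm
  · rintro ⟨_, ⟨as, has, rfl⟩, _, ⟨bs, hbs, rfl⟩, rfl⟩
    obtain ⟨cs, hcs, hcs_eq⟩ := exists_vsum_of_padd has hbs hab
    refine ⟨cs, hcs, ?_⟩
    rw [← Finset.sum_add_distrib]
    exact Finset.sum_congr rfl fun i _ => (hcs_eq i (m i) (hm i)).symm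

lemma decompSums_neg (x : E) : decompSums (fun i => -m i) x = -decompSums m x := by
  ext r
  simp only [decompSums, Set.mem_neg, Set.mem_ofPred_eq, Pi.neg_apply, Finset.sum_neg_distrib,
    neg_eq_iff_eq_neg]

lemma isSignedMeasure_sSup_decompSums (hRDP : RDP E) (hn : 1 ≤ n) (hm : ∀ i, IsJordan (m i)) :
    IsSignedMeasure fun x => sSup (decompSums m x) := by
  have hsm i := (hm i).isSignedMeasure
  intro a b c hab
  dsimp only
  rw [decompSums_eq_add hRDP hsm hab]
  exact csSup_add (decompSums_nonempty hn hsm a) (bddAbove_decompSums hm a)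
    (decompSums_nonempty hn hsm b) (bddAbove_decompSums hm b)

lemma mle_sSup_decompSums (hRDP : RDP E) (hn : 1 ≤ n) (hm : ∀ i, IsJordan (m i)) (i : Fin n) :
    MLe (m i) fun x => sSup (decompSums m x) :=
  mle_of_le (hm i).isSignedMeasure (isSignedMeasure_sSup_decompSums hRDP hn hm) fun x =>
    le_csSup (bddAbove_decompSums hm x) (mem_decompSums (fun j => (hm j).isSignedMeasure) i x)

theorem IsSupIn.apply_eq_sSup_decompSums (hRDP : RDP E) (hn : 1 ≤ n) (hm : ∀ i, IsJordan (m i))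
    {v : E → ℝ} (hv : IsSupIn (Set.range m) v) (x : E) : v x = sSup (decompSums m x) := by
  obtain ⟨hvj, hupper, hleast⟩ := hv
  have hms := mle_sSup_decompSums hRDP hn hm
  refine le_antisymm ?_ ?_
  · exact (hleast _ ((hm ⟨0, hn⟩).of_mle (hms _)) (Set.forall_mem_range.mpr hms)).le x
  · exact csSup_le (decompSums_nonempty hn (fun i => (hm i).isSignedMeasure) x)
      (mem_upperBounds_decompSums hvj.isSignedMeasure (fun i => hupper _ ⟨i, rfl⟩) x)

end Decomposition

/-- Theorem 3.5: for finitely many Jordan signed measures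
`m₁, …, mₙ` on a pseudo effect algebra with (RDP),
`(⋁ᵢ mᵢ)(x) = sup{m₁(x₁) + ⋯ + mₙ(xₙ) : x = x₁ + ⋯ + xₙ}` and
`(⋀ᵢ mᵢ)(x) = inf{m₁(x₁) + ⋯ + mₙ(xₙ) : x = x₁ + ⋯ + xₙ}`. -/
theorem stmt6 (hRDP : RDP E) (n : ℕ) (hn : 1 ≤ n) (m : Fin n → E → ℝ)
    (hm : ∀ i, IsJordan (m i)) :
    (∀ v : E → ℝ, IsSupIn (Set.range m) v → ∀ x : E,
      v x = sSup {r : ℝ | ∃ xs : Fin n → E, lsum (List.ofFn xs) = some x ∧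
        r = ∑ i, m i (xs i)}) ∧
    (∀ w : E → ℝ, IsInfIn (Set.range m) w → ∀ x : E,
      w x = sInf {r : ℝ | ∃ xs : Fin n → E, lsum (List.ofFn xs) = some x ∧
        r = ∑ i, m i (xs i)}) := by
  refine ⟨fun v hv x => hv.apply_eq_sSup_decompSums hRDP hn hm x, fun w hw x => ?_⟩
  have hsup : IsSupIn (Set.range fun i => -m i) (-w) := by
    simpa [← Set.image_neg_eq_neg, ← Set.range_comp, Function.comp_def] using hw.neg
  have hneg := hsup.apply_eq_sSup_decompSums hRDP hn (fun i => (hm i).neg) x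
  rw [decompSums_neg] at hneg
  change w x = sInf (decompSums m x)
  rw [Real.sInf_def, ← hneg, Pi.neg_apply, neg_neg]

end PseudoEffectAlgebra
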